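/- arXiv:0812.3894 — 3 statements merged into one kernel-verified Lean document; each statement's English description precedes it below -/
import Mathlib

section
/- For the N point source system, the angular momentum A = ∑_k Γ_k (z_k × ż_k) vanishes identically, where z × w denotes the cross product Re(i z̄ w) = (i z)·w of planar vectors. -/
open Finset

/-- Planar cross product of two complex numbers viewed as vectors in ℝ². -/
def cross (z w : ℂ) : ℝ := z.re * w.im - z.im * w.re

/-!
Inserting the equations of motion, the angular momentum becomes a sum over ordered pairs
`k ≠ l` of `Γ_k Γ_l (z_k × z_l) / |z_k - z_l|²`, which is antisymmetric in `(k, l)`;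
so the contributions of `(k, l)` and `(l, k)` cancel.
-/

theorem Finset.sum_sum_sdiff_singleton_eq_zero_of_antisymm {ι M : Type*} [DecidableEq ι]
    [AddCommGroup M] (s : Finset ι) (g : ι → ι → M) (hg : ∀ k l, g l k = -g k l) :
    ∑ k ∈ s, ∑ l ∈ s \ {k}, g k l = 0 := by
  rw [← sum_finset_product' s.offDiag s (fun k => s \ {k})
    (fun p => by simp only [mem_offDiag, mem_sdiff, mem_singleton, ne_comm])]
  refine sum_involution (fun p _ => p.swap)
    (fun p _ => by rw [Prod.fst_swap, Prod.snd_swap, hg, neg_add_cancel])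
    (fun p hp _ => ?_) (fun p hp => ?_) (fun p _ => rfl)
  · exact fun h => (mem_offDiag.1 hp).2.2 (congrArg Prod.fst h).symm
  · obtain ⟨hk, hl, hkl⟩ := mem_offDiag.1 hp
    exact mem_offDiag.2 ⟨hl, hk, hkl.symm⟩

namespace Complex

theorem cross_anticomm (z w : ℂ) : -cross z w = cross w z := by
  simp only [cross]; ring

theorem cross_neg_right (z w : ℂ) : cross z (-w) = -cross z w := by
  simp only [cross, neg_re, neg_im]; ring

theorem cross_sub_right (z v w : ℂ) : cross z (v - w) = cross z v - cross z w := by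
  simp only [cross, sub_re, sub_im]; ring

theorem cross_self (z : ℂ) : cross z z = 0 := by
  simp only [cross]; ring

theorem cross_ofReal_mul_right (z w : ℂ) (r : ℝ) : cross z (r * w) = r * cross z w := by
  simp only [cross, re_ofReal_mul, im_ofReal_mul]; ring

theorem cross_sum_right {ι : Type*} (z : ℂ) (s : Finset ι) (f : ι → ℂ) :
    cross z (∑ i ∈ s, f i) = ∑ i ∈ s, cross z (f i) := by
  simp only [cross, re_sum, im_sum, mul_sum, sum_sub_distrib]

theorem cross_mul_sub_div_norm_sq (Γ : ℝ) (z w : ℂ) :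
    cross z ((Γ : ℂ) * (z - w) / (‖z - w‖ : ℂ) ^ 2) = Γ * cross w z / ‖z - w‖ ^ 2 := by
  have : (Γ : ℂ) * (z - w) / (‖z - w‖ : ℂ) ^ 2 = ((Γ / ‖z - w‖ ^ 2 : ℝ) : ℂ) * (z - w) := by
    push_cast; ring
  rw [this, cross_ofReal_mul_right, cross_sub_right, cross_self, zero_sub, cross_anticomm]
  ring

end Complex

open Complex

theorem angular_momentum_vanishes_general (N : ℕ) (z : Fin N → ℝ → ℂ) (Γ : Fin N → ℝ)
    (hode : ∀ (k : Fin N) (t : ℝ), HasDerivAt (z k)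
      (-∑ l ∈ univ \ {k}, (Γ l : ℂ) * (z k t - z l t) / (‖z k t - z l t‖)^2) t) :
    ∀ t : ℝ, ∑ k, Γ k * cross (z k t) (deriv (z k) t) = 0 := by
  intro t
  have hpair : ∀ k, Γ k * cross (z k t) (deriv (z k) t) =
      ∑ l ∈ univ \ {k}, Γ k * Γ l * cross (z k t) (z l t) / ‖z k t - z l t‖ ^ 2 := by
    intro k
    simp only [(hode k t).deriv, cross_neg_right, cross_sum_right, cross_mul_sub_div_norm_sq,
      mul_sum, ← sum_neg_distrib]
    refine sum_congr rfl fun l _ => ?_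
    rw [← cross_anticomm]; ring
  simp only [hpair]
  refine sum_sum_sdiff_singleton_eq_zero_of_antisymm _ _ fun k l => ?_
  rw [← cross_anticomm, norm_sub_rev]; ring

theorem angular_momentum_vanishes (N : ℕ) (z : Fin N → ℝ → ℂ) (Γ : Fin N → ℝ)
    (hdist : ∀ t, ∀ k l : Fin N, k ≠ l → z k t ≠ z l t)
    (hode : ∀ (k : Fin N) (t : ℝ), HasDerivAt (z k)
      (-∑ l ∈ univ \ {k}, (Γ l : ℂ) * (z k t - z l t) / (‖z k t - z l t‖)^2) t) :
    ∀ t : ℝ, ∑ k, Γ k * cross (z k t) (deriv (z k) t) = 0 :=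
  angular_momentum_vanishes_general N z Γ hode
end

section
/- If Γ_1 + Γ_2 = 0, then for the two point source system the relative position z_1 - z_2 is constant, and consequently both sources move with the same constant velocity. -/
theorem sub_eq_sub_of_hasDerivAt_eq {𝕜 G : Type*} [RCLike 𝕜] [NormedAddCommGroup G]
    [NormedSpace 𝕜 G] {f g v : 𝕜 → G} (hf : ∀ t, HasDerivAt f (v t) t)
    (hg : ∀ t, HasDerivAt g (v t) t) (t s : 𝕜) : f t - g t = f s - g s :=
  is_const_of_deriv_eq_zero (f := f - g) (fun x ↦ ((hf x).sub (hg x)).differentiableAt)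
    (fun x ↦ by simpa using ((hf x).sub (hg x)).deriv) t s

/-- The velocity that a point source of intensity `Γ` induces at relative position `w`. -/
noncomputable def sourceVelocity (Γ : ℝ) (w : ℂ) : ℂ := -(Γ : ℂ) * w / ‖w‖ ^ 2

theorem sourceVelocity_neg_neg (Γ : ℝ) (w : ℂ) :
    sourceVelocity (-Γ) (-w) = sourceVelocity Γ w := by
  simp only [sourceVelocity, Complex.ofReal_neg, norm_neg]
  ring

theorem two_sources_opposite_intensities_general (z₁ z₂ : ℝ → ℂ) (Γ₁ Γ₂ : ℝ)
    (h₁ : ∀ t, HasDerivAt z₁ (-(Γ₂ : ℂ) * (z₁ t - z₂ t) / (‖z₁ t - z₂ t‖)^2) t)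
    (h₂ : ∀ t, HasDerivAt z₂ (-(Γ₁ : ℂ) * (z₂ t - z₁ t) / (‖z₂ t - z₁ t‖)^2) t)
    (hΓ : Γ₁ + Γ₂ = 0) :
    (∀ t s : ℝ, z₁ t - z₂ t = z₁ s - z₂ s) ∧
    (∀ t : ℝ, deriv z₁ t = deriv z₂ t) ∧
    (∀ t s : ℝ, deriv z₁ t = deriv z₁ s) := by
  have h₁' (t : ℝ) : HasDerivAt z₁ (sourceVelocity Γ₂ (z₁ t - z₂ t)) t := h₁ t
  have h₂' (t : ℝ) : HasDerivAt z₂ (sourceVelocity Γ₂ (z₁ t - z₂ t)) t := by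
    rw [← sourceVelocity_neg_neg, neg_sub, ← eq_neg_of_add_eq_zero_left hΓ]
    exact h₂ t
  have hconst := sub_eq_sub_of_hasDerivAt_eq h₁' h₂'
  refine ⟨hconst, fun t ↦ (h₁' t).deriv.trans (h₂' t).deriv.symm, fun t s ↦ ?_⟩
  rw [(h₁' t).deriv, (h₁' s).deriv, hconst t s]

theorem two_sources_opposite_intensities (z₁ z₂ : ℝ → ℂ) (Γ₁ Γ₂ : ℝ)
    (hdist : ∀ t, z₁ t ≠ z₂ t)
    (h₁ : ∀ t, HasDerivAt z₁ (-(Γ₂ : ℂ) * (z₁ t - z₂ t) / (‖z₁ t - z₂ t‖)^2) t)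
    (h₂ : ∀ t, HasDerivAt z₂ (-(Γ₁ : ℂ) * (z₂ t - z₁ t) / (‖z₂ t - z₁ t‖)^2) t)
    (hΓ : Γ₁ + Γ₂ = 0) :
    (∀ t s : ℝ, z₁ t - z₂ t = z₁ s - z₂ s) ∧
    (∀ t : ℝ, deriv z₁ t = deriv z₂ t) ∧
    (∀ t s : ℝ, deriv z₁ t = deriv z₁ s) :=
  two_sources_opposite_intensities_general z₁ z₂ Γ₁ Γ₂ h₁ h₂ hΓ
end

section
/- For the three point source system in relative coordinates ξ = z_3 - z_1, η = z_3 - z_2, the time rescaling dt/ds = |ξ|² transforms the singular equations into dξ/ds = -(Γ_1+Γ_3)ξ - Γ_2|ξ|²/η̄ - Γ_2|ξ|²/(ξ̄-η̄), dη/ds = -Γ_1ξ - (Γ_2+Γ_3)|ξ|²/η̄ - Γ_1|ξ|²/(η̄-ξ̄), and the right-hand sides extend continuously to ξ = 0 (with η ≠ 0) with values (0, -Γ_1·0) = 0 and -Γ_1ξ respectively, i.e. the vector field is regular at binary collision ξ = 0. -/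
open Complex ComplexConjugate

/-!
Along a solution, `ξ̇ = ż₃ - ż₁` and `η̇ = ż₃ - ż₂` are sums of terms `Γ / (z̄ₖ - z̄ₗ)`, and every
conjugated difference is `ξ̄`, `η̄` or `ξ̄ - η̄` up to sign. The rescaling multiplies the velocities by
`|ξ|² = ξ ξ̄`, which cancels the pole `1 / ξ̄`; what remains has `|ξ|²` in the numerator and only
`η̄` and `ξ̄ - η̄` in the denominators, so it is continuous wherever `η ≠ 0`, in particular at `ξ = 0`.
-/

lemma conj_sub_conj_ne_zero {z w : ℂ} (h : z ≠ w) : conj z - conj w ≠ 0 :=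
  sub_ne_zero.mpr ((starRingEnd ℂ).injective.ne h)

section RelativeVelocity

variable (Γ₁ Γ₂ Γ₃ : ℝ) {z₁ z₂ z₃ : ℂ}

lemma sq_norm_mul_ξ_velocity (h12 : z₁ ≠ z₂) (h13 : z₁ ≠ z₃) (h23 : z₂ ≠ z₃) :
    (‖z₃ - z₁‖ ^ 2 : ℂ) *
      ((-(Γ₁ : ℂ) / (conj z₃ - conj z₁) - Γ₂ / (conj z₃ - conj z₂))
        - (-(Γ₂ : ℂ) / (conj z₁ - conj z₂) - Γ₃ / (conj z₁ - conj z₃)))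
      = -((Γ₁ : ℂ) + Γ₃) * (z₃ - z₁) - Γ₂ * ‖z₃ - z₁‖ ^ 2 / conj (z₃ - z₂)
        - Γ₂ * ‖z₃ - z₁‖ ^ 2 / (conj (z₃ - z₁) - conj (z₃ - z₂)) := by
  rw [← mul_conj', map_sub, map_sub, sub_sub_sub_cancel_left]
  field_simp [conj_sub_conj_ne_zero h12, conj_sub_conj_ne_zero h13, conj_sub_conj_ne_zero h23,
    conj_sub_conj_ne_zero h12.symm, conj_sub_conj_ne_zero h13.symm, conj_sub_conj_ne_zero h23.symm]
  ring

lemma sq_norm_mul_η_velocity (h12 : z₁ ≠ z₂) (h13 : z₁ ≠ z₃) (h23 : z₂ ≠ z₃) :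
    (‖z₃ - z₁‖ ^ 2 : ℂ) *
      ((-(Γ₁ : ℂ) / (conj z₃ - conj z₁) - Γ₂ / (conj z₃ - conj z₂))
        - (-(Γ₁ : ℂ) / (conj z₂ - conj z₁) - Γ₃ / (conj z₂ - conj z₃)))
      = -(Γ₁ : ℂ) * (z₃ - z₁) - ((Γ₂ : ℂ) + Γ₃) * ‖z₃ - z₁‖ ^ 2 / conj (z₃ - z₂)
        - Γ₁ * ‖z₃ - z₁‖ ^ 2 / (conj (z₃ - z₂) - conj (z₃ - z₁)) := by
  rw [← mul_conj', map_sub, map_sub, sub_sub_sub_cancel_left]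
  field_simp [conj_sub_conj_ne_zero h12, conj_sub_conj_ne_zero h13, conj_sub_conj_ne_zero h23,
    conj_sub_conj_ne_zero h12.symm, conj_sub_conj_ne_zero h13.symm, conj_sub_conj_ne_zero h23.symm]
  ring

end RelativeVelocity

theorem three_sources_blow_up (Γ₁ Γ₂ Γ₃ : ℝ) (z₁ z₂ z₃ : ℝ → ℂ)
    (hdist : ∀ t, z₁ t ≠ z₂ t ∧ z₁ t ≠ z₃ t ∧ z₂ t ≠ z₃ t)
    (h₁ : ∀ t, HasDerivAt z₁
      (-(Γ₂ : ℂ) / (starRingEnd ℂ (z₁ t) - starRingEnd ℂ (z₂ t))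
        - (Γ₃ : ℂ) / (starRingEnd ℂ (z₁ t) - starRingEnd ℂ (z₃ t))) t)
    (h₂ : ∀ t, HasDerivAt z₂
      (-(Γ₁ : ℂ) / (starRingEnd ℂ (z₂ t) - starRingEnd ℂ (z₁ t))
        - (Γ₃ : ℂ) / (starRingEnd ℂ (z₂ t) - starRingEnd ℂ (z₃ t))) t)
    (h₃ : ∀ t, HasDerivAt z₃
      (-(Γ₁ : ℂ) / (starRingEnd ℂ (z₃ t) - starRingEnd ℂ (z₁ t))
        - (Γ₂ : ℂ) / (starRingEnd ℂ (z₃ t) - starRingEnd ℂ (z₂ t))) t)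
    (ξ η : ℝ → ℂ) (hξ : ∀ t, ξ t = z₃ t - z₁ t) (hη : ∀ t, η t = z₃ t - z₂ t)
    -- the blown-up right hand sides:
    (F₁ : ℂ → ℂ → ℂ) (F₂ : ℂ → ℂ → ℂ)
    (hF₁ : ∀ x y : ℂ, F₁ x y = -((Γ₁ : ℂ) + Γ₃) * x
        - (Γ₂ : ℂ) * ‖x‖^2 / starRingEnd ℂ y
        - (Γ₂ : ℂ) * ‖x‖^2 / (starRingEnd ℂ x - starRingEnd ℂ y))
    (hF₂ : ∀ x y : ℂ, F₂ x y = -(Γ₁ : ℂ) * x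
        - ((Γ₂ : ℂ) + Γ₃) * ‖x‖^2 / starRingEnd ℂ y
        - (Γ₁ : ℂ) * ‖x‖^2 / (starRingEnd ℂ y - starRingEnd ℂ x)) :
    -- (a) the time rescaling dt/ds = |ξ|² transforms the equations into dξ/ds = F₁, dη/ds = F₂
    (∀ σ : ℝ → ℝ, (∀ s, HasDerivAt σ (‖ξ (σ s)‖^2) s) →
      ∀ s, HasDerivAt (fun s => ξ (σ s)) (F₁ (ξ (σ s)) (η (σ s))) s ∧
           HasDerivAt (fun s => η (σ s)) (F₂ (ξ (σ s)) (η (σ s))) s) ∧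
    -- (b) the blown-up field is regular (continuous) at binary collision ξ = 0, with
    -- values F₁ 0 y = 0 and F₂ 0 y = -Γ₁ * 0 = 0
    (∀ y : ℂ, y ≠ 0 →
      ContinuousAt (fun p : ℂ × ℂ => (F₁ p.1 p.2, F₂ p.1 p.2)) (0, y) ∧
      F₁ 0 y = 0 ∧ F₂ 0 y = -(Γ₁ : ℂ) * 0) := by
  refine ⟨fun σ hσ s => ?_, fun y hy => ⟨?_, by simp [hF₁], by simp [hF₂]⟩⟩
  · obtain ⟨h12, h13, h23⟩ := hdist (σ s)
    obtain rfl : ξ = fun t => z₃ t - z₁ t := funext hξ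
    obtain rfl : η = fun t => z₃ t - z₂ t := funext hη
    have hξ' := ((h₃ (σ s)).sub (h₁ (σ s))).scomp s (hσ s)
    have hη' := ((h₃ (σ s)).sub (h₂ (σ s))).scomp s (hσ s)
    rw [real_smul, ofReal_pow, sq_norm_mul_ξ_velocity Γ₁ Γ₂ Γ₃ h12 h13 h23, ← hF₁] at hξ'
    rw [real_smul, ofReal_pow, sq_norm_mul_η_velocity Γ₁ Γ₂ Γ₃ h12 h13 h23, ← hF₂] at hη'
    exact ⟨hξ', hη'⟩
  · simp only [hF₁, hF₂]
    fun_prop (disch := simpa using hy)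
end
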